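/- arXiv:2310.08093 — 4 statements merged into one kernel-verified Lean document; each statement's English description precedes it below -/
import Mathlib

section
/- Let v : ℝⁿ → ℝ (n ≥ 2) be a quasi-concave function which is C^∞ on a domain U ⊂ ℝⁿ. Then at every point of U: 2(|D²v Dv|² − Δv · Δ_∞v) ≥ |Dv|² (|D²v|² − (Δv)²), where Δ_∞ v = D²v Dv · Dv. -/
/-- First partial derivative `∂v/∂xᵢ` of `v : ℝⁿ → ℝ`. -/
noncomputable def pgrad {n : ℕ} (v : (Fin n → ℝ) → ℝ) (x : Fin n → ℝ) (i : Fin n) : ℝ :=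
  fderiv ℝ v x (Pi.single i 1)

/-- Second partial derivative `∂²v/∂xᵢ∂xⱼ` of `v : ℝⁿ → ℝ`. -/
noncomputable def phess {n : ℕ} (v : (Fin n → ℝ) → ℝ) (x : Fin n → ℝ) (i j : Fin n) : ℝ :=
  fderiv ℝ (fun y => fderiv ℝ v y (Pi.single i 1)) x (Pi.single j 1)


open Filter Set Topology

lemma expand_clm {n : ℕ} (L : (Fin n → ℝ) →L[ℝ] ℝ) (w : Fin n → ℝ) :
    L w = ∑ i, w i * L (Pi.single i 1) := by
  have hw : w = ∑ i, w i • (Pi.single i 1 : Fin n → ℝ) := by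
    ext j
    simp [Finset.sum_apply, Pi.single_apply]
  calc L w = L (∑ i, w i • (Pi.single i 1 : Fin n → ℝ)) := by rw [← hw]
    _ = ∑ i, w i * L (Pi.single i 1) := by
        rw [map_sum]
        exact Finset.sum_congr rfl fun i _ => by rw [map_smul]; simp

section setup

variable {n : ℕ} {U : Set (Fin n → ℝ)} (hU : IsOpen U)
  {v : (Fin n → ℝ) → ℝ} (hsm : ContDiffOn ℝ (⊤ : ℕ∞) v U)
  {x : Fin n → ℝ} (hx : x ∈ U)

include hU hsm hx

lemma hasfderiv_eventually : ∀ᶠ y in 𝓝 x, HasFDerivAt v (fderiv ℝ v y) y := by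
  filter_upwards [hU.eventually_mem hx] with y hy
  exact ((hsm.contDiffAt (hU.mem_nhds hy)).differentiableAt (by simp)).hasFDerivAt

lemma fderiv_cd1 : ContDiffAt ℝ 1 (fderiv ℝ v) x :=
  (hsm.contDiffAt (hU.mem_nhds hx)).fderiv_right (by exact WithTop.coe_le_coe.2 le_top)

lemma hasfderiv2 : HasFDerivAt (fderiv ℝ v) (fderiv ℝ (fderiv ℝ v) x) x :=
  ((fderiv_cd1 hU hsm hx).differentiableAt one_ne_zero).hasFDerivAt

lemma phess_eq (i j : Fin n) :
    phess v x i j = fderiv ℝ (fderiv ℝ v) x (Pi.single j 1) (Pi.single i 1) := by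
  unfold phess
  rw [fderiv_clm_apply ((fderiv_cd1 hU hsm hx).differentiableAt one_ne_zero)
    (differentiableAt_const _)]
  simp

lemma phess_symm (i j : Fin n) : phess v x i j = phess v x j i := by
  rw [phess_eq hU hsm hx, phess_eq hU hsm hx]
  exact second_derivative_symmetric_of_eventually_of_real
    (hasfderiv_eventually hU hsm hx) (hasfderiv2 hU hsm hx) _ _

lemma quad_eq (ξ : Fin n → ℝ) :
    fderiv ℝ (fderiv ℝ v) x ξ ξ = ∑ i, ∑ j, phess v x i j * ξ i * ξ j := by
  set f'' := fderiv ℝ (fderiv ℝ v) x with hf''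
  have h1 : f'' ξ ξ = ∑ k, ξ k * (f'' ξ (Pi.single k 1)) := expand_clm (f'' ξ) ξ
  rw [h1]
  refine Finset.sum_congr rfl fun k _ => ?_
  have h2 : f'' ξ (Pi.single k 1) = (f''.flip (Pi.single k 1)) ξ := rfl
  rw [h2, expand_clm (f''.flip (Pi.single k 1)) ξ, Finset.mul_sum]
  refine Finset.sum_congr rfl fun l _ => ?_
  rw [phess_eq hU hsm hx]
  have h3 : (f''.flip (Pi.single k 1)) (Pi.single l 1) = f'' (Pi.single l 1) (Pi.single k 1) := rfl
  rw [h3, ← hf'']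
  ring

end setup

lemma grad_eq {n : ℕ} (v : (Fin n → ℝ) → ℝ) (x w : Fin n → ℝ) :
    fderiv ℝ v x w = ∑ i, w i * pgrad v x i :=
  expand_clm (fderiv ℝ v x) w

/-- First-order condition for quasiconcave functions: if `v y ≥ v x` and `v` is
differentiable at `x`, then the derivative of `v` at `x` in direction `y - x` is ≥ 0. -/
lemma foc {n : ℕ} (v : (Fin n → ℝ) → ℝ)
    (hqc : ∀ (x y : Fin n → ℝ) (l : ℝ), 0 ≤ l → l ≤ 1 →
      min (v x) (v y) ≤ v (l • x + (1 - l) • y))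
    (x : Fin n → ℝ) (hdiff : DifferentiableAt ℝ v x)
    (y : Fin n → ℝ) (hy : v x ≤ v y) :
    0 ≤ fderiv ℝ v x (y - x) := by
  by_contra hlt
  push_neg at hlt
  set γ : ℝ → (Fin n → ℝ) := fun l => x + l • (y - x) with hγ_def
  have hγd : ∀ l : ℝ, HasDerivAt γ (y - x) l := by
    intro l
    have h1 : HasDerivAt (fun l : ℝ => l • (y - x)) ((1:ℝ) • (y - x)) l :=
      (hasDerivAt_id l).smul_const (y - x)
    rw [one_smul] at h1
    exact h1.const_add x
  set F : ℝ → ℝ := fun l => v (γ l) with hF_def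
  have hF : HasDerivAt F (fderiv ℝ v x (y - x)) 0 := by
    have h0 : γ 0 = x := by simp [hγ_def]
    have hc : HasFDerivAt v (fderiv ℝ v x) (γ 0) := h0 ▸ hdiff.hasFDerivAt
    exact hc.comp_hasDerivAt 0 (hγd 0)
  have hmono : ∀ l : ℝ, 0 ≤ l → l ≤ 1 → F 0 ≤ F l := by
    intro l hl0 hl1
    have := hqc y x l hl0 hl1
    rw [min_eq_right hy] at this
    have heq : l • y + (1 - l) • x = γ l := by
      rw [hγ_def]; simp only [smul_sub, sub_smul, one_smul]; abel
    rw [heq] at this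
    have h0 : F 0 = v x := by simp [hF_def, hγ_def]
    rw [h0]
    exact this
  -- slope argument
  have hslope := hasDerivAt_iff_tendsto_slope.1 hF
  have hsub : (𝓝[>] (0:ℝ)) ≤ 𝓝[≠] (0:ℝ) :=
    nhdsWithin_mono 0 (fun l hl => ne_of_gt hl)
  have hslope' : Tendsto (slope F 0) (𝓝[>] (0:ℝ)) (𝓝 (fderiv ℝ v x (y - x))) :=
    hslope.mono_left hsub
  have hev1 : ∀ᶠ l in 𝓝[>] (0:ℝ), slope F 0 l < 0 :=
    hslope'.eventually_lt_const hlt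
  have hev2 : ∀ᶠ l in 𝓝[>] (0:ℝ), l ∈ Set.Ioo (0:ℝ) 1 :=
    Ioo_mem_nhdsGT_of_mem ⟨le_refl 0, one_pos⟩
  obtain ⟨l, hl1, hl2⟩ := (hev1.and hev2).exists
  have hsl : slope F 0 l = (F l - F 0) / l := by
    rw [slope_def_field, sub_zero]
  rw [hsl] at hl1
  have hFl := hmono l (le_of_lt hl2.1) (le_of_lt hl2.2)
  have : 0 ≤ (F l - F 0) / l := div_nonneg (by linarith) (le_of_lt hl2.1)
  linarith

set_option maxHeartbeats 1000000 in
lemma hess_neg {n : ℕ} (U : Set (Fin n → ℝ)) (hU : IsOpen U)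
    (v : (Fin n → ℝ) → ℝ)
    (hqc : ∀ (x y : Fin n → ℝ) (l : ℝ), 0 ≤ l → l ≤ 1 →
      min (v x) (v y) ≤ v (l • x + (1 - l) • y))
    (hsm : ContDiffOn ℝ (⊤ : ℕ∞) v U)
    (x : Fin n → ℝ) (hx : x ∈ U)
    (hs : 0 < ∑ i, (pgrad v x i) ^ 2)
    (ξ : Fin n → ℝ) (hξ : ∑ i, ξ i * pgrad v x i = 0) :
    ∑ i, ∑ j, phess v x i j * ξ i * ξ j ≤ 0 := by
  by_contra hcon
  push_neg at hcon
  set f'' := fderiv ℝ (fderiv ℝ v) x with hf''_def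
  set gv : Fin n → ℝ := fun i => pgrad v x i with hgv_def
  set s : ℝ := ∑ i, (pgrad v x i) ^ 2 with hs_def
  set q : ℝ := ∑ i, ∑ j, phess v x i j * ξ i * ξ j with hq_def
  have hquad : f'' ξ ξ = q := quad_eq hU hsm hx ξ
  have hgs : fderiv ℝ v x gv = s := by
    rw [grad_eq]
    exact Finset.sum_congr rfl fun i _ => by rw [hgv_def]; ring
  have hgξ : fderiv ℝ v x ξ = 0 := by rw [grad_eq]; exact hξ
  set β : ℝ := -q / (4 * s) with hβ_def
  have hβ : β < 0 := by
    rw [hβ_def]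
    apply div_neg_of_neg_of_pos (by linarith) (by linarith)
  set γ : ℝ → (Fin n → ℝ) := fun t => x + (t • ξ + (β * t^2) • gv) with hγ_def
  have hγ0 : γ 0 = x := by simp [hγ_def]
  have hγd : ∀ t : ℝ, HasDerivAt γ (ξ + (β * (2 * t)) • gv) t := by
    intro t
    have ha : HasDerivAt (fun t : ℝ => t • ξ) ξ t := by
      simpa using (hasDerivAt_id t).smul_const ξ
    have hb : HasDerivAt (fun t : ℝ => (β * t^2) • gv) ((β * (2 * t)) • gv) t := by
      have h2 : HasDerivAt (fun t : ℝ => β * t^2) (β * (2 * t)) t := by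
        simpa using (hasDerivAt_pow 2 t).const_mul β
      exact h2.smul_const gv
    exact (ha.add hb).const_add x
  have hγd0 : HasDerivAt γ ξ 0 := by simpa using hγd 0
  have hUev : ∀ᶠ t in 𝓝 (0:ℝ), γ t ∈ U := by
    have hc : ContinuousAt γ 0 := (hγd0).continuousAt
    exact hc.eventually_mem (hγ0 ▸ hU.mem_nhds hx)
  set F : ℝ → ℝ := fun t => v (γ t) with hF_def
  set G : ℝ → ℝ := fun t => fderiv ℝ v (γ t) (ξ + (β * (2 * t)) • gv) with hG_def
  have hFd : ∀ᶠ t in 𝓝 (0:ℝ), HasDerivAt F (G t) t := by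
    filter_upwards [hUev] with t ht
    exact (((hsm.contDiffAt (hU.mem_nhds ht)).differentiableAt
      (by simp)).hasFDerivAt).comp_hasDerivAt t (hγd t)
  -- derivative of G at 0
  have hG2 : HasDerivAt G (q / 2) 0 := by
    have hL : HasDerivAt (fun t => fderiv ℝ v (γ t)) (f'' ξ) 0 := by
      have hdf : HasFDerivAt (fderiv ℝ v) f'' (γ 0) := hγ0 ▸ hasfderiv2 hU hsm hx
      exact hdf.comp_hasDerivAt 0 hγd0
    have hu : HasDerivAt (fun t : ℝ => ξ + (β * (2 * t)) • gv) ((β * 2) • gv) 0 := by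
      have h1 : HasDerivAt (fun t : ℝ => β * (2 * t)) (β * 2) 0 := by
        simpa using ((hasDerivAt_id (0:ℝ)).const_mul 2).const_mul β
      exact (h1.smul_const gv).const_add ξ
    have hG' := hL.clm_apply hu
    have heq : f'' ξ (ξ + (β * (2 * 0)) • gv) + (fderiv ℝ v (γ 0)) ((β * 2) • gv) = q / 2 := by
      rw [hγ0]
      simp only [mul_zero, zero_smul, add_zero, map_smul, smul_eq_mul]
      rw [hquad, hgs, hβ_def]
      field_simp
      ring
    rw [heq] at hG'
    exact hG'
  have hG0 : G 0 = 0 := by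
    rw [hG_def]
    simp only [mul_zero, zero_smul, add_zero, hγ0]
    exact hgξ
  -- G is positive immediately to the right of 0
  have hsub : (𝓝[>] (0:ℝ)) ≤ 𝓝[≠] (0:ℝ) := nhdsWithin_mono 0 (fun l hl => ne_of_gt hl)
  have hslope : Tendsto (slope G 0) (𝓝[>] (0:ℝ)) (𝓝 (q / 2)) :=
    (hasDerivAt_iff_tendsto_slope.1 hG2).mono_left hsub
  have hpos : ∀ᶠ t in 𝓝[>] (0:ℝ), 0 < G t := by
    have h1 : ∀ᶠ t in 𝓝[>] (0:ℝ), 0 < slope G 0 t :=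
      hslope.eventually_const_lt (by linarith)
    filter_upwards [h1, self_mem_nhdsWithin] with t ht1 ht2
    have ht2' : (0:ℝ) < t := ht2
    have hsl : slope G 0 t = G t / t := by rw [slope_def_field, hG0, sub_zero, sub_zero]
    rw [hsl] at ht1
    rcases div_pos_iff.1 ht1 with h | h
    · exact h.1
    · linarith [h.2, ht2']
  -- extract a small interval
  obtain ⟨δ₁, hδ₁, H₁⟩ := Metric.eventually_nhds_iff.1 hFd
  obtain ⟨u, hu0, H₂⟩ := mem_nhdsGT_iff_exists_Ioo_subset.1 hpos
  set δ : ℝ := min (δ₁ / 2) (u / 2) with hδ_def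
  have hδpos : 0 < δ := by
    apply lt_min (by linarith) (by simpa using half_pos (show (0:ℝ) < u from hu0))
  have hδlt : ∀ t ∈ Set.Icc (0:ℝ) δ, HasDerivAt F (G t) t := by
    intro t ht
    apply H₁
    rw [Real.dist_eq, sub_zero]
    rw [abs_of_nonneg ht.1]
    calc t ≤ δ := ht.2
      _ ≤ δ₁ / 2 := min_le_left _ _
      _ < δ₁ := by linarith
  have hGpos : ∀ t ∈ Set.Ioo (0:ℝ) δ, 0 < G t := by
    intro t ht
    apply H₂
    constructor
    · exact ht.1
    · have hu0' : (0:ℝ) < u := hu0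
      calc t < δ := ht.2
        _ ≤ u / 2 := min_le_right _ _
        _ < u := by linarith
  have hmono : StrictMonoOn F (Set.Icc 0 δ) := by
    apply strictMonoOn_of_deriv_pos (convex_Icc 0 δ)
    · intro t ht
      exact (hδlt t ht).continuousAt.continuousWithinAt
    · intro t ht
      rw [interior_Icc] at ht
      rw [(hδlt t ⟨le_of_lt ht.1, le_of_lt ht.2⟩).deriv]
      exact hGpos t ht
  have hFδ : F 0 < F δ :=
    hmono (Set.left_mem_Icc.2 (le_of_lt hδpos)) (Set.right_mem_Icc.2 (le_of_lt hδpos)) hδpos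
  have hvle : v x ≤ v (γ δ) := by
    have h1 : F 0 = v x := by rw [hF_def]; simp only [hγ0]
    have h2 : F δ = v (γ δ) := rfl
    rw [h1, h2] at hFδ
    exact le_of_lt hFδ
  -- first-order condition gives a contradiction
  have hdiffx : DifferentiableAt ℝ v x :=
    (hsm.contDiffAt (hU.mem_nhds hx)).differentiableAt (by simp)
  have hfoc := foc v hqc x hdiffx (γ δ) hvle
  have hcompute : fderiv ℝ v x (γ δ - x) = β * δ^2 * s := by
    have h1 : γ δ - x = δ • ξ + (β * δ^2) • gv := by
      rw [hγ_def]; simp only [add_sub_cancel_left]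
    rw [h1, map_add, map_smul, map_smul, smul_eq_mul, smul_eq_mul, hgξ, hgs]
    ring
  rw [hcompute] at hfoc
  nlinarith [hfoc, mul_pos (mul_pos (neg_pos.mpr hβ) (pow_pos hδpos 2)) hs]



lemma alg {n : ℕ} (A : Fin n → Fin n → ℝ) (g : Fin n → ℝ)
    (hsym : ∀ i j, A i j = A j i)
    (hs : 0 < ∑ i, g i ^ 2)
    (hneg : ∀ ξ : Fin n → ℝ, (∑ i, ξ i * g i) = 0 →
      (∑ i, ∑ j, A i j * ξ i * ξ j) ≤ 0) :
    (∑ i, g i ^ 2) * ((∑ i, ∑ j, (A i j) ^ 2) - (∑ i, A i i) ^ 2)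
      ≤ 2 * ((∑ i, (∑ j, A i j * g j) ^ 2)
          - (∑ i, A i i) * (∑ i, ∑ j, A i j * g i * g j)) := by
  classical
  set s : ℝ := ∑ i, g i ^ 2 with hs_def
  set a : Fin n → ℝ := fun i => ∑ j, A i j * g j with ha_def
  set c : ℝ := ∑ i, ∑ j, A i j * g i * g j with hc_def
  set t : ℝ := ∑ i, A i i with ht_def
  set f : ℝ := ∑ i, ∑ j, (A i j) ^ 2 with hf_def
  set m : ℝ := ∑ i, (a i) ^ 2 with hm_def
  -- basic identities
  have hag : ∑ i, a i * g i = c := by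
    rw [hc_def]
    refine Finset.sum_congr rfl fun i _ => ?_
    rw [ha_def]; simp only [Finset.sum_mul]
    exact Finset.sum_congr rfl fun j _ => by ring
  have hgb : ∑ i, g i * (∑ j, A i j * a j) = m := by
    have h1 : ∑ i, g i * (∑ j, A i j * a j) = ∑ i, ∑ j, A j i * g i * a j := by
      refine Finset.sum_congr rfl fun i _ => ?_
      rw [Finset.mul_sum]
      exact Finset.sum_congr rfl fun j _ => by rw [hsym i j]; ring
    rw [h1, Finset.sum_comm]
    rw [hm_def]
    refine Finset.sum_congr rfl fun j _ => ?_
    have h2 : ∑ i, A j i * g i * a j = (∑ i, A j i * g i) * a j := by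
      rw [Finset.sum_mul]
    rw [h2, ha_def]
    ring_nf
  -- the matrix C
  set C : Fin n → Fin n → ℝ :=
    fun i j => -(s^2 * A i j) + s * a i * g j + s * g i * a j - c * g i * g j with hC_def
  have hCsym : ∀ i j, C i j = C j i := by
    intro i j; rw [hC_def]; simp only; rw [hsym i j]; ring
  -- C is positive semidefinite
  have hpsd : ∀ x : Fin n → ℝ, 0 ≤ ∑ i, ∑ j, C i j * x i * x j := by
    intro x
    set d : ℝ := ∑ k, g k * x k with hd_def
    set e : ℝ := ∑ k, a k * x k with he_def
    set y : Fin n → ℝ := fun i => s * x i - d * g i with hy_def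
    have hyg : ∑ i, y i * g i = 0 := by
      have : ∀ i, y i * g i = s * (x i * g i) - d * (g i ^ 2) := by
        intro i; rw [hy_def]; ring
      rw [Finset.sum_congr rfl fun i _ => this i, Finset.sum_sub_distrib,
        ← Finset.mul_sum, ← Finset.mul_sum, ← hs_def]
      have : ∑ i, x i * g i = d := by
        rw [hd_def]; exact Finset.sum_congr rfl fun i _ => by ring
      rw [this]; ring
    have key := hneg y hyg
    -- core double sums
    have hAxg : ∑ i, ∑ j, A i j * x i * g j = e := by
      rw [he_def]
      refine Finset.sum_congr rfl fun i _ => ?_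
      have : ∑ j, A i j * x i * g j = x i * ∑ j, A i j * g j := by
        rw [Finset.mul_sum]; exact Finset.sum_congr rfl fun j _ => by ring
      rw [this, ha_def]; ring_nf
    have hAgx : ∑ i, ∑ j, A i j * g i * x j = e := by
      rw [Finset.sum_comm, he_def]
      refine Finset.sum_congr rfl fun j _ => ?_
      have : ∑ i, A i j * g i * x j = x j * ∑ i, A j i * g i := by
        rw [Finset.mul_sum]
        exact Finset.sum_congr rfl fun i _ => by rw [hsym i j]; ring
      rw [this, ha_def]; ring_nf
    have hAxx : ∑ i, ∑ j, A i j * y i * y j =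
        s^2 * (∑ i, ∑ j, A i j * x i * x j) - s*d*e - s*d*e + d^2 * c := by
      have h1 : ∀ i j, A i j * y i * y j =
          s^2 * (A i j * x i * x j) - (s*d) * (A i j * g i * x j)
            - (s*d) * (A i j * x i * g j) + d^2 * (A i j * g i * g j) := by
        intro i j; rw [hy_def]; ring
      calc ∑ i, ∑ j, A i j * y i * y j
          = ∑ i, ∑ j, (s^2 * (A i j * x i * x j) - (s*d) * (A i j * g i * x j)
            - (s*d) * (A i j * x i * g j) + d^2 * (A i j * g i * g j)) := by
            exact Finset.sum_congr rfl fun i _ => Finset.sum_congr rfl fun j _ => h1 i j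
        _ = s^2 * (∑ i, ∑ j, A i j * x i * x j)
            - (s*d) * (∑ i, ∑ j, A i j * g i * x j)
            - (s*d) * (∑ i, ∑ j, A i j * x i * g j)
            + d^2 * (∑ i, ∑ j, A i j * g i * g j) := by
            simp only [Finset.sum_add_distrib, Finset.sum_sub_distrib, ← Finset.mul_sum]
        _ = s^2 * (∑ i, ∑ j, A i j * x i * x j) - s*d*e - s*d*e + d^2 * c := by
            rw [hAgx, hAxg, ← hc_def]
    have hCxx : ∑ i, ∑ j, C i j * x i * x j =
        -(s^2 * (∑ i, ∑ j, A i j * x i * x j)) + 2*s*e*d - c * d^2 := by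
      have h1 : ∀ i j, C i j * x i * x j =
          -(s^2 * (A i j * x i * x j)) + s * ((a i * x i) * (g j * x j))
            + s * ((g i * x i) * (a j * x j)) - c * ((g i * x i) * (g j * x j)) := by
        intro i j; rw [hC_def]; ring
      calc ∑ i, ∑ j, C i j * x i * x j
          = ∑ i, ∑ j, (-(s^2 * (A i j * x i * x j)) + s * ((a i * x i) * (g j * x j))
            + s * ((g i * x i) * (a j * x j)) - c * ((g i * x i) * (g j * x j))) := by
            exact Finset.sum_congr rfl fun i _ => Finset.sum_congr rfl fun j _ => h1 i j
        _ = -(s^2 * (∑ i, ∑ j, A i j * x i * x j))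
            + s * ((∑ i, a i * x i) * (∑ j, g j * x j))
            + s * ((∑ i, g i * x i) * (∑ j, a j * x j))
            - c * ((∑ i, g i * x i) * (∑ j, g j * x j)) := by
            simp only [Finset.sum_add_distrib, Finset.sum_sub_distrib, Finset.sum_neg_distrib,
              ← Finset.mul_sum, Finset.sum_mul_sum]
        _ = -(s^2 * (∑ i, ∑ j, A i j * x i * x j)) + 2*s*e*d - c * d^2 := by
            have h2 : ∑ k, g k * x k = d := rfl
            have h3 : ∑ k, a k * x k = e := rfl
            rw [h2, h3]; ring
    rw [hCxx]
    nlinarith [key, hAxx]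
  -- entry inequality from positive semidefiniteness
  have hentry : ∀ i j, C i j ^ 2 ≤ C i i * C j j := by
    intro i j
    have hq : ∀ r : ℝ, 0 ≤ C j j * (r * r) + (2 * C i j) * r + C i i := by
      intro r
      have h := hpsd (fun p => (if p = i then 1 else 0) + r * (if p = j then 1 else 0))
      have hcomp : (∑ p, ∑ q, C p q * ((if p = i then 1 else 0) + r * (if p = j then 1 else 0))
          * ((if q = i then 1 else 0) + r * (if q = j then 1 else 0)))
          = C j j * (r * r) + (2 * C i j) * r + C i i := by
        have hinner : ∀ p, (∑ q, C p q * ((if p = i then 1 else 0) + r * (if p = j then 1 else 0))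
            * ((if q = i then 1 else 0) + r * (if q = j then 1 else 0)))
            = ((if p = i then 1 else 0) + r * (if p = j then 1 else 0)) * (C p i + r * C p j) := by
          intro p
          have : ∀ q, C p q * ((if p = i then 1 else 0) + r * (if p = j then 1 else 0))
              * ((if q = i then 1 else 0) + r * (if q = j then 1 else 0))
              = ((if p = i then 1 else 0) + r * (if p = j then 1 else 0)) *
                ((if q = i then 1 else 0) * C p q + (if q = j then 1 else 0) * (r * C p q)) := by
            intro q; ring
          rw [Finset.sum_congr rfl fun q _ => this q, ← Finset.mul_sum,
            Finset.sum_add_distrib]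
          simp [Finset.sum_ite_eq]
        rw [Finset.sum_congr rfl fun p _ => hinner p]
        have : ∀ p, ((if p = i then 1 else 0) + r * (if p = j then 1 else 0)) * (C p i + r * C p j)
            = ((if p = i then 1 else 0) * (C p i + r * C p j)
              + (if p = j then 1 else 0) * (r * (C p i + r * C p j))) := by
          intro p; ring
        rw [Finset.sum_congr rfl fun p _ => this p, Finset.sum_add_distrib]
        simp [ite_mul, Finset.sum_ite_eq']
        rw [hCsym j i]
        ring
      rw [hcomp] at h
      exact h
    have hd := discrim_le_zero hq
    rw [discrim] at hd
    nlinarith [hd]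
  -- sum the entry inequalities
  have hsumsq : ∑ i, ∑ j, C i j ^ 2 ≤ (∑ i, C i i) ^ 2 := by
    have h1 : ∑ i, ∑ j, C i j ^ 2 ≤ ∑ i, ∑ j, C i i * C j j := by
      refine Finset.sum_le_sum fun i _ => Finset.sum_le_sum fun j _ => hentry i j
    have h2 : ∑ i : Fin n, ∑ j : Fin n, C i i * C j j = (∑ i, C i i) ^ 2 := by
      rw [← Finset.sum_mul_sum]; ring
    linarith
  -- trace identities
  have hT1 : ∑ i, C i i = -(s^2 * t) + s * c := by
    have h1 : ∀ i, C i i = -(s^2 * A i i) + 2 * s * (a i * g i) - c * g i ^ 2 := by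
      intro i; rw [hC_def]; ring
    rw [Finset.sum_congr rfl fun i _ => h1 i]
    simp only [Finset.sum_sub_distrib, Finset.sum_add_distrib, Finset.sum_neg_distrib,
      ← Finset.mul_sum]
    rw [hag]
    have h2 : (∑ i, A i i : ℝ) = t := rfl
    have h3 : (∑ i, g i ^ 2 : ℝ) = s := rfl
    rw [h2, h3]
    ring
  have hT2 : ∑ i, ∑ j, C i j ^ 2 = s^4 * f - 2 * s^3 * m + s^2 * c^2 := by
    have h1 : ∀ i j, C i j ^ 2 =
        s^4 * A i j ^ 2
        + (s^2 * a i ^ 2) * (g j ^ 2) + (s^2 * g i ^ 2) * (a j ^ 2)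
        + (c^2 * g i ^ 2) * (g j ^ 2)
        - 2 * s^3 * (a i * (A i j * g j)) - 2 * s^3 * (g i * (A i j * a j))
        + 2 * s^2 * c * (A i j * g i * g j)
        + (2 * s^2 * (a i * g i)) * (a j * g j)
        - (2 * s * c * (a i * g i)) * (g j ^ 2)
        - (2 * s * c * (g i ^ 2)) * (a j * g j) := by
      intro i j; rw [hC_def]; ring
    calc ∑ i, ∑ j, C i j ^ 2
        = ∑ i, ∑ j, (s^4 * A i j ^ 2
        + (s^2 * a i ^ 2) * (g j ^ 2) + (s^2 * g i ^ 2) * (a j ^ 2)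
        + (c^2 * g i ^ 2) * (g j ^ 2)
        - 2 * s^3 * (a i * (A i j * g j)) - 2 * s^3 * (g i * (A i j * a j))
        + 2 * s^2 * c * (A i j * g i * g j)
        + (2 * s^2 * (a i * g i)) * (a j * g j)
        - (2 * s * c * (a i * g i)) * (g j ^ 2)
        - (2 * s * c * (g i ^ 2)) * (a j * g j)) := by
          exact Finset.sum_congr rfl fun i _ => Finset.sum_congr rfl fun j _ => h1 i j
      _ = s^4 * (∑ i, ∑ j, A i j ^ 2)
        + (∑ i, s^2 * a i ^ 2) * (∑ j, g j ^ 2) + (∑ i, s^2 * g i ^ 2) * (∑ j, a j ^ 2)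
        + (∑ i, c^2 * g i ^ 2) * (∑ j, g j ^ 2)
        - 2 * s^3 * (∑ i, a i * (∑ j, A i j * g j)) - 2 * s^3 * (∑ i, g i * (∑ j, A i j * a j))
        + 2 * s^2 * c * (∑ i, ∑ j, A i j * g i * g j)
        + (∑ i, 2 * s^2 * (a i * g i)) * (∑ j, a j * g j)
        - (∑ i, 2 * s * c * (a i * g i)) * (∑ j, g j ^ 2)
        - (∑ i, 2 * s * c * (g i ^ 2)) * (∑ j, a j * g j) := by
          simp only [Finset.sum_add_distrib, Finset.sum_sub_distrib,
            ← Finset.mul_sum, ← Finset.sum_mul, Finset.sum_mul_sum]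
      _ = s^4 * f - 2 * s^3 * m + s^2 * c^2 := by
          have haa : ∑ i, a i * (∑ j, A i j * g j) = m := by
            refine Finset.sum_congr rfl fun i _ => ?_
            have : (∑ j, A i j * g j : ℝ) = a i := rfl
            rw [this]; ring
          simp only [← Finset.mul_sum, ← Finset.sum_mul]
          have h2 : (∑ i, g i ^ 2 : ℝ) = s := rfl
          have h3 : (∑ i, a i ^ 2 : ℝ) = m := rfl
          have h4 : (∑ i, ∑ j, A i j ^ 2 : ℝ) = f := rfl
          have h5 : (∑ i, ∑ j, A i j * g i * g j : ℝ) = c := rfl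
          rw [haa, hgb, hag]
          rw [h2, h3, h4, h5]
          ring
  -- combine
  have key2 : s^4 * f - 2 * s^3 * m + s^2 * c^2 ≤ (-(s^2 * t) + s * c)^2 := by
    rw [← hT1, ← hT2]; exact hsumsq
  have hs3 : 0 < s^3 := by positivity
  have final : s^3 * (s * (f - t^2)) ≤ s^3 * (2 * (m - t * c)) := by nlinarith [key2]
  exact le_of_mul_le_mul_left final hs3

theorem statement4 (n : ℕ) (hn : 2 ≤ n) (U : Set (Fin n → ℝ)) (hU : IsOpen U)
    (v : (Fin n → ℝ) → ℝ)
    (hqc : ∀ (x y : Fin n → ℝ) (l : ℝ), 0 ≤ l → l ≤ 1 →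
      min (v x) (v y) ≤ v (l • x + (1 - l) • y))
    (hsm : ContDiffOn ℝ (⊤ : ℕ∞) v U)
    (x : Fin n → ℝ) (hx : x ∈ U) :
    (∑ i, (pgrad v x i) ^ 2) *
        ((∑ i, ∑ j, (phess v x i j) ^ 2) - (∑ i, phess v x i i) ^ 2)
      ≤ 2 * ((∑ i, (∑ j, phess v x i j * pgrad v x j) ^ 2)
          - (∑ i, phess v x i i) * (∑ i, ∑ j, phess v x i j * pgrad v x i * pgrad v x j)) := by
  by_cases hz : (∑ i, (pgrad v x i) ^ 2) = 0
  · have hgi : ∀ i, pgrad v x i = 0 := by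
      intro i
      have h1 := (Finset.sum_eq_zero_iff_of_nonneg (fun i _ => sq_nonneg (pgrad v x i))).1 hz
        i (Finset.mem_univ i)
      exact pow_eq_zero_iff two_ne_zero |>.1 h1
    simp [hgi]
  · have hpos : 0 < ∑ i, (pgrad v x i) ^ 2 :=
      lt_of_le_of_ne (Finset.sum_nonneg fun i _ => sq_nonneg _) (Ne.symm hz)
    exact alg (phess v x) (pgrad v x)
      (fun i j => phess_symm hU hsm hx i j) hpos
      (fun ξ hξ => hess_neg U hU v hqc hsm x hx hpos ξ hξ)
end

section
/- For any C^∞ function v on a domain U ⊂ ℝ² one has the pointwise identity 2(|D²v Dv|² − Δv · Δ_∞v) = |Dv|² (|D²v|² − (Δv)²), where Δ_∞ v = D²v Dv · Dv. -/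
theorem statement5 (U : Set (Fin 2 → ℝ)) (hU : IsOpen U)
    (v : (Fin 2 → ℝ) → ℝ) (hsm : ContDiffOn ℝ (⊤ : ℕ∞) v U)
    (x : Fin 2 → ℝ) (hx : x ∈ U) :
    2 * ((∑ i, (∑ j, phess v x i j * pgrad v x j) ^ 2)
        - (∑ i, phess v x i i) * (∑ i, ∑ j, phess v x i j * pgrad v x i * pgrad v x j))
      = (∑ i, (pgrad v x i) ^ 2) *
          ((∑ i, ∑ j, (phess v x i j) ^ 2) - (∑ i, phess v x i i) ^ 2) := by
  have hca : ContDiffAt ℝ (⊤ : ℕ∞) v x := hsm.contDiffAt (hU.mem_nhds hx)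
  have hsymm : IsSymmSndFDerivAt ℝ v x := hca.isSymmSndFDerivAt (by rw [minSmoothness_of_isRCLikeNormedField]; exact WithTop.coe_le_coe.mpr (le_top : (2 : ℕ∞) ≤ ⊤))
  have hd : DifferentiableAt ℝ (fderiv ℝ v) x := by
    have : ContDiffAt ℝ (⊤ : ℕ∞) (fderiv ℝ v) x := hca.fderiv_right (by simp)
    exact this.differentiableAt (by simp)
  have key : ∀ i j : Fin 2, phess v x i j = fderiv ℝ (fderiv ℝ v) x (Pi.single j 1) (Pi.single i 1) := by
    intro i j
    have := fderiv_clm_apply (c := fderiv ℝ v) (u := fun _ => Pi.single i (1:ℝ)) hd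
      (differentiableAt_const _)
    simp only [fderiv_fun_const, Pi.zero_apply] at this
    simp [phess, this]
  have h : phess v x 0 1 = phess v x 1 0 := by
    rw [key, key, hsymm.eq]
  simp only [Fin.sum_univ_two]
  rw [h]
  ring
end

section
/- In the plane, the function v(x,y) = x^{4/3} − y^{4/3} satisfies the ∞-Laplace equation Δ_∞ v := v_x² v_{xx} + 2 v_x v_y v_{xy} + v_y² v_{yy} = 0 at every point with x ≠ 0 and y ≠ 0. -/
/-- Aronsson's function `v(x,y) = |x|^{4/3} - |y|^{4/3}`. -/
noncomputable def aronsson (x y : ℝ) : ℝ := |x| ^ ((4 : ℝ) / 3) - |y| ^ ((4 : ℝ) / 3)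

/-!
Since `v(x, y) = φ x - φ y` with `φ = |·| ^ p`, `p = 4/3`, the mixed derivative vanishes and
`Δ_∞ v = φ'(x)² φ''(x) - φ'(y)² φ''(y)`. For `φ = |·| ^ p` one has
`φ'² φ'' = p³ (p - 1) |s| ^ (3p - 4)`, which is constant precisely for `p = 4/3`,
so the two terms cancel.
-/

open Real

theorem hasDerivAt_abs_rpow_mul_self {x : ℝ} (hx : x ≠ 0) (q : ℝ) :
    HasDerivAt (fun s => |s| ^ q * s) ((q + 1) * |x| ^ q) x := by
  have hx' : |x| ≠ 0 := abs_ne_zero.mpr hx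
  have hsign : (SignType.sign x : ℝ) * x = |x| := by
    rcases hx.lt_or_gt with h | h <;> simp [h, abs_of_neg, abs_of_pos]
  refine ((hasDerivAt_abs hx).rpow_const (Or.inl hx')).mul (hasDerivAt_id' x) |>.congr_deriv ?_
  calc _ = q * (|x| ^ (q - 1) * (SignType.sign x * x)) + |x| ^ q := by ring
    _ = _ := by rw [hsign, rpow_sub_one hx', div_mul_cancel₀ _ hx']; ring

theorem deriv_abs_rpow {p : ℝ} (hp : 1 < p) :
    deriv (fun s : ℝ => |s| ^ p) = fun s => p * |s| ^ (p - 2) * s :=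
  funext fun s => (hasDerivAt_abs_rpow s hp).deriv

theorem deriv_deriv_abs_rpow {p : ℝ} (hp : 1 < p) {x : ℝ} (hx : x ≠ 0) :
    deriv (deriv fun s : ℝ => |s| ^ p) x = p * (p - 1) * |x| ^ (p - 2) := by
  simp_rw [deriv_abs_rpow hp, mul_assoc]
  rw [((hasDerivAt_abs_rpow_mul_self hx (p - 2)).const_mul p).deriv]
  ring_nf

theorem deriv_sq_mul_deriv_deriv_abs_rpow {p : ℝ} (hp : 1 < p) {x : ℝ} (hx : x ≠ 0) :
    deriv (fun s : ℝ => |s| ^ p) x ^ 2 * deriv (deriv fun s : ℝ => |s| ^ p) x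
      = p ^ 3 * (p - 1) * |x| ^ (3 * p - 4) := by
  have hx' : 0 < |x| := abs_pos.mpr hx
  have hpow : |x| ^ (3 * p - 4) = (|x| ^ (p - 2)) ^ 3 * |x| ^ 2 := by
    rw [← rpow_natCast, ← rpow_natCast, ← rpow_mul hx'.le, ← rpow_add hx']; norm_num; ring_nf
  rw [deriv_deriv_abs_rpow hp hx, deriv_abs_rpow hp, hpow, sq_abs]
  ring

theorem deriv_sq_mul_deriv_deriv_abs_rpow_four_thirds {x : ℝ} (hx : x ≠ 0) :
    deriv (fun s : ℝ => |s| ^ ((4 : ℝ) / 3)) x ^ 2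
      * deriv (deriv fun s : ℝ => |s| ^ ((4 : ℝ) / 3)) x = 64 / 81 := by
  rw [deriv_sq_mul_deriv_deriv_abs_rpow (by norm_num) hx]
  norm_num

theorem deriv_aronsson_fst (y : ℝ) :
    deriv (fun s => aronsson s y) = deriv fun s : ℝ => |s| ^ ((4 : ℝ) / 3) :=
  funext fun _ => deriv_sub_const _

theorem deriv_aronsson_snd (x : ℝ) :
    deriv (fun t => aronsson x t) = -deriv fun t : ℝ => |t| ^ ((4 : ℝ) / 3) :=
  funext fun _ => deriv_const_sub _

theorem statement18 (x y : ℝ) (hx : x ≠ 0) (hy : y ≠ 0) :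
    (deriv (fun s => aronsson s y) x) ^ 2
        * deriv (fun s => deriv (fun s' => aronsson s' y) s) x
      + 2 * deriv (fun s => aronsson s y) x * deriv (fun t => aronsson x t) y
        * deriv (fun t => deriv (fun s => aronsson s t) x) y
      + (deriv (fun t => aronsson x t) y) ^ 2
        * deriv (fun t => deriv (fun t' => aronsson x t') t) y = 0 := by
  simp only [deriv_aronsson_fst, deriv_aronsson_snd, deriv_const, Pi.neg_apply, deriv.fun_neg]
  linear_combination deriv_sq_mul_deriv_deriv_abs_rpow_four_thirds hx
    - deriv_sq_mul_deriv_deriv_abs_rpow_four_thirds hy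
end

section
/- Let f : B(z,R) → ℝ (B(z,R) ⊂ ℝ²) be continuous and satisfy the maximum and minimum principle on circles: for every 0 < ρ ≤ R, osc over the closed ball B(z,ρ) of f equals osc over the circle ∂B(z,ρ) of f. Suppose also f ∈ W^{1,2}(B(z,2r)) with 2r ≤ R. Then osc_{B(z,r)} f ≤ (1/r) ∫_{B(z,2r)} |Df| dx, and consequently osc_{B(z,r)} f / r ≤ C (⨍_{B(z,2r)} |Df|² dx)^{1/2} for a universal constant C. -/
/-!
On every circle `∂B(z, ρ)`, parametrized by angle, the fundamental theorem of calculus bounds the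
oscillation of `f` by `∫ ρ ‖Df‖ dθ`. The maximum principle on circles makes this also a bound for
the oscillation over `B(z, ρ) ⊇ B(z, r)`, so integrating over `ρ ∈ (r, 2r)` and passing to polar
coordinates gives `r · osc_{B(z,r)} f ≤ ∫_{B(z,2r)} ‖Df‖`. Jensen's inequality
`(⨍ ‖Df‖)² ≤ ⨍ ‖Df‖²` and `|B(z, 2r)| = 4πr²` give the second estimate with `C = 4π`.
-/

open MeasureTheory

/-- Oscillation of `f` over a set `s`. -/
noncomputable def oscOn (f : EuclideanSpace ℝ (Fin 2) → ℝ)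
    (s : Set (EuclideanSpace ℝ (Fin 2))) : ℝ :=
  sSup (f '' s) - sInf (f '' s)

open Set Metric Bornology
open scoped ENNReal Real

local notation "ℝ²" => EuclideanSpace ℝ (Fin 2)

section Oscillation

variable {f : ℝ² → ℝ} {s t : Set ℝ²}

lemma oscOn_eq_diam (hf : IsBounded (f '' s)) : oscOn f s = diam (f '' s) :=
  (Real.diam_eq hf).symm

lemma oscOn_mono (hst : s ⊆ t) (ht : IsBounded (f '' t)) : oscOn f s ≤ oscOn f t := by
  rw [oscOn_eq_diam ht, oscOn_eq_diam (ht.subset (image_mono hst))]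
  exact diam_mono (image_mono hst) ht

lemma ofReal_oscOn_le_of_forall_edist_le {D : ℝ≥0∞} (hD : ∀ x ∈ s, ∀ y ∈ s, edist (f x) (f y) ≤ D) :
    ENNReal.ofReal (oscOn f s) ≤ D := by
  rcases eq_or_ne D ⊤ with rfl | hD_top
  · exact le_top
  have hdiam : ediam (f '' s) ≤ D := ediam_image_le_iff.2 hD
  have hb : IsBounded (f '' s) := isBounded_iff_ediam_ne_top.2 (ne_top_of_le_ne_top hD_top hdiam)
  rw [oscOn_eq_diam hb, diam, ENNReal.ofReal_toReal (ne_top_of_le_ne_top hD_top hdiam)]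
  exact hdiam

end Oscillation

lemma enorm_sub_le_lintegral_enorm_deriv {E : Type*} [NormedAddCommGroup E] [NormedSpace ℝ E]
    [CompleteSpace E] {g : ℝ → E} {a b : ℝ} (hab : a ≤ b) (hgc : ContinuousOn g (Icc a b))
    (hgd : DifferentiableOn ℝ g (Ioo a b)) :
    ‖g b - g a‖ₑ ≤ ∫⁻ t in Ioo a b, ‖deriv g t‖ₑ := by
  rcases eq_or_ne (∫⁻ t in Ioo a b, ‖deriv g t‖ₑ) ⊤ with h | h
  · exact h ▸ le_top
  have hint : IntegrableOn (deriv g) (Ioo a b) :=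
    ⟨aestronglyMeasurable_deriv _ _, h.lt_top⟩
  rw [← ofReal_integral_norm_eq_lintegral_enorm hint, ← ofReal_norm,
    Measure.restrict_congr_set Ioo_ae_eq_Ioc, ← intervalIntegral.integral_of_le hab]
  refine ENNReal.ofReal_le_ofReal (norm_sub_le_integral_of_norm_deriv_le_of_le hab hgc hgd
    (.of_forall fun _ _ => le_rfl) ?_)
  rw [intervalIntegrable_iff_integrableOn_Ioo_of_le hab]
  exact hint.norm

noncomputable def complexToPlane : ℂ ≃ₗᵢ[ℝ] ℝ² := Complex.orthonormalBasisOneI.repr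

-- `z + ρ e^{iθ}`, with `ℂ` identified with the plane through the orthonormal basis `1, i`.
noncomputable def polarPoint (z : ℝ²) (ρ θ : ℝ) : ℝ² := z + complexToPlane (circleMap 0 ρ θ)

lemma measurePreserving_add_complexToPlane (z : ℝ²) :
    MeasurePreserving (fun w => z + complexToPlane w) :=
  (measurePreserving_add_left volume z).comp Complex.orthonormalBasisOneI.measurePreserving_repr

lemma dist_add_complexToPlane (z : ℝ²) (w : ℂ) : dist (z + complexToPlane w) z = ‖w‖ := by
  rw [dist_eq_norm, add_sub_cancel_left, LinearIsometryEquiv.norm_map]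

lemma dist_polarPoint (z : ℝ²) (ρ θ : ℝ) : dist (polarPoint z ρ θ) z = |ρ| := by
  rw [polarPoint, dist_add_complexToPlane, norm_circleMap_zero]

lemma polarPoint_mem_sphere (z : ℝ²) {ρ : ℝ} (hρ : 0 ≤ ρ) (θ : ℝ) :
    polarPoint z ρ θ ∈ sphere z ρ := by
  rw [mem_sphere, dist_polarPoint, abs_of_nonneg hρ]

lemma image_polarPoint_Ioc (z : ℝ²) {ρ : ℝ} (hρ : 0 ≤ ρ) :
    polarPoint z ρ '' Ioc (-π) π = sphere z ρ := by
  refine Subset.antisymm ?_ fun x hx => ?_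
  · rintro _ ⟨θ, -, rfl⟩
    exact polarPoint_mem_sphere z hρ θ
  · have hw : complexToPlane.symm (x - z) ∈ range (circleMap 0 ρ) := by
      rw [range_circleMap, mem_sphere_zero_iff_norm, LinearIsometryEquiv.norm_map,
        ← dist_eq_norm, abs_of_nonneg hρ]
      exact hx
    rw [← (periodic_circleMap 0 ρ).image_Ioc Real.two_pi_pos (-π), neg_add_eq_sub,
      two_mul, add_sub_cancel_right] at hw
    obtain ⟨θ, hθ, hθx⟩ := hw
    exact ⟨θ, hθ, by rw [polarPoint, hθx, LinearIsometryEquiv.apply_symm_apply,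
      add_sub_cancel]⟩

lemma hasDerivAt_polarPoint (z : ℝ²) (ρ θ : ℝ) :
    HasDerivAt (polarPoint z ρ) (complexToPlane (circleMap 0 ρ θ * Complex.I)) θ :=
  (complexToPlane.toContinuousLinearEquiv.hasFDerivAt.comp_hasDerivAt θ
    (hasDerivAt_circleMap 0 ρ θ)).const_add z

lemma continuous_polarPoint (z : ℝ²) : Continuous fun p : ℝ × ℝ => polarPoint z p.1 p.2 := by
  unfold polarPoint circleMap
  fun_prop

lemma polarCoord_symm_eq_circleMap (p : ℝ × ℝ) :
    Complex.polarCoord.symm p = circleMap 0 p.1 p.2 := by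
  simp [circleMap_zero, Complex.exp_mul_I, Complex.ofReal_cos, Complex.ofReal_sin]

lemma lintegral_ball_eq_lintegral_polarPoint (z : ℝ²) (s : ℝ) {G : ℝ² → ℝ≥0∞}
    (hG : Measurable G) :
    ∫⁻ x in ball z s, G x =
      ∫⁻ ρ in Ioo 0 s, ∫⁻ θ in Ioo (-π) π, ENNReal.ofReal ρ * G (polarPoint z ρ θ) := by
  have hpre : (fun w => z + complexToPlane w) ⁻¹' ball z s = ball 0 s := by
    ext w
    simp only [mem_preimage, mem_ball, dist_add_complexToPlane, dist_zero_right]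
  have hmeas : Measurable fun p : ℝ × ℝ => ENNReal.ofReal p.1 * G (polarPoint z p.1 p.2) :=
    measurable_fst.ennreal_ofReal.mul (hG.comp (continuous_polarPoint z).measurable)
  have hpolar : ∀ p ∈ Complex.polarCoord.target,
      ENNReal.ofReal p.1 • (ball 0 s).indicator (fun w => G (z + complexToPlane w))
        (Complex.polarCoord.symm p) =
      (Iio s ×ˢ univ).indicator (fun p => ENNReal.ofReal p.1 * G (polarPoint z p.1 p.2)) p := by
    rintro p ⟨hp : 0 < p.1, -⟩
    have hiff : Complex.polarCoord.symm p ∈ ball 0 s ↔ p ∈ Iio s ×ˢ univ := by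
      simp [abs_of_pos hp]
    by_cases h : p ∈ Iio s ×ˢ univ
    · rw [indicator_of_mem (hiff.2 h), indicator_of_mem h, polarCoord_symm_eq_circleMap]
      rfl
    · rw [indicator_of_notMem (mt hiff.1 h), indicator_of_notMem h, smul_zero]
  calc ∫⁻ x in ball z s, G x
      = ∫⁻ w, (ball 0 s).indicator (fun w => G (z + complexToPlane w)) w := by
        rw [lintegral_indicator measurableSet_ball, ← hpre,
          (measurePreserving_add_complexToPlane z).setLIntegral_comp_preimage measurableSet_ball hG]
    _ = ∫⁻ p in Complex.polarCoord.target,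
          (Iio s ×ˢ univ).indicator (fun p => ENNReal.ofReal p.1 * G (polarPoint z p.1 p.2)) p := by
        rw [← Complex.lintegral_comp_polarCoord_symm]
        exact setLIntegral_congr_fun (measurableSet_Ioi.prod measurableSet_Ioo) hpolar
    _ = ∫⁻ p in Ioo 0 s ×ˢ Ioo (-π) π, ENNReal.ofReal p.1 * G (polarPoint z p.1 p.2) := by
        rw [lintegral_indicator (measurableSet_Iio.prod MeasurableSet.univ),
          Measure.restrict_restrict (measurableSet_Iio.prod MeasurableSet.univ),
          Complex.polarCoord_target, prod_inter_prod, Iio_inter_Ioi, univ_inter]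
    _ = _ := by
        rw [Measure.volume_eq_prod, ← Measure.prod_restrict]
        exact lintegral_prod _ hmeas.aemeasurable

lemma ofReal_oscOn_sphere_le {f : ℝ² → ℝ} {z : ℝ²} {ρ : ℝ} (hρ : 0 ≤ ρ)
    (hf : ∀ x ∈ sphere z ρ, DifferentiableAt ℝ f x) :
    ENNReal.ofReal (oscOn f (sphere z ρ)) ≤
      ∫⁻ θ in Ioo (-π) π, ENNReal.ofReal ρ * ‖fderiv ℝ f (polarPoint z ρ θ)‖ₑ := by
  set g := f ∘ polarPoint z ρ
  have hderiv (θ : ℝ) : HasDerivAt g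
      (fderiv ℝ f (polarPoint z ρ θ) (complexToPlane (circleMap 0 ρ θ * Complex.I))) θ :=
    (hf _ (polarPoint_mem_sphere z hρ θ)).hasFDerivAt.comp_hasDerivAt θ
      (hasDerivAt_polarPoint z ρ θ)
  have hspeed (θ : ℝ) : ‖deriv g θ‖ₑ ≤ ENNReal.ofReal ρ * ‖fderiv ℝ f (polarPoint z ρ θ)‖ₑ := by
    have hv : ‖complexToPlane (circleMap 0 ρ θ * Complex.I)‖ₑ = ENNReal.ofReal ρ := by
      rw [LinearIsometryEquiv.enorm_map, ← ofReal_norm, norm_mul, Complex.norm_I, mul_one,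
        norm_circleMap_zero, abs_of_nonneg hρ]
    rw [(hderiv θ).deriv, mul_comm (ENNReal.ofReal ρ), ← hv]
    exact (fderiv ℝ f (polarPoint z ρ θ)).le_opENorm _
  have hedist : ∀ a ∈ Ioc (-π) π, ∀ b ∈ Ioc (-π) π, a ≤ b →
      edist (g a) (g b) ≤ ∫⁻ θ in Ioo (-π) π, ENNReal.ofReal ρ * ‖fderiv ℝ f (polarPoint z ρ θ)‖ₑ :=
    fun a ha b hb hab => calc
      edist (g a) (g b) = ‖g b - g a‖ₑ := by rw [edist_comm, edist_eq_enorm_sub]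
      _ ≤ ∫⁻ t in Ioo a b, ‖deriv g t‖ₑ :=
        enorm_sub_le_lintegral_enorm_deriv hab
          (fun t _ => (hderiv t).continuousAt.continuousWithinAt)
          (fun t _ => (hderiv t).differentiableAt.differentiableWithinAt)
      _ ≤ ∫⁻ t in Ioo (-π) π, ‖deriv g t‖ₑ := lintegral_mono_set (Ioo_subset_Ioo ha.1.le hb.2)
      _ ≤ _ := lintegral_mono hspeed
  apply ofReal_oscOn_le_of_forall_edist_le
  rw [← image_polarPoint_Ioc z hρ]
  rintro _ ⟨a, ha, rfl⟩ _ ⟨b, hb, rfl⟩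
  rcases le_total a b with hab | hba
  · exact hedist a ha b hb hab
  · rw [edist_comm]
    exact hedist b hb a ha hba

lemma ofReal_oscOn_ball_mul_le {f : ℝ² → ℝ} {z : ℝ²} {r s : ℝ} (hr : 0 ≤ r)
    (hf : DifferentiableOn ℝ f (ball z s))
    (hosc : ∀ ρ ∈ Ioo r s, oscOn f (closedBall z ρ) ≤ oscOn f (sphere z ρ)) :
    ENNReal.ofReal (oscOn f (ball z r)) * ENNReal.ofReal (s - r) ≤
      ∫⁻ x in ball z s, ‖fderiv ℝ f x‖ₑ := by
  have hcircle : ∀ ρ ∈ Ioo r s, ENNReal.ofReal (oscOn f (ball z r)) ≤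
      ∫⁻ θ in Ioo (-π) π, ENNReal.ofReal ρ * ‖fderiv ℝ f (polarPoint z ρ θ)‖ₑ := by
    intro ρ hρ
    have hsub : closedBall z ρ ⊆ ball z s := closedBall_subset_ball hρ.2
    have hbdd : IsBounded (f '' closedBall z ρ) :=
      ((isCompact_closedBall z ρ).image_of_continuousOn (hf.continuousOn.mono hsub)).isBounded
    have hball : ball z r ⊆ closedBall z ρ :=
      (ball_subset_ball hρ.1.le).trans ball_subset_closedBall
    calc ENNReal.ofReal (oscOn f (ball z r)) ≤ ENNReal.ofReal (oscOn f (sphere z ρ)) :=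
          ENNReal.ofReal_le_ofReal ((oscOn_mono hball hbdd).trans (hosc ρ hρ))
      _ ≤ _ := ofReal_oscOn_sphere_le (hr.trans hρ.1.le) fun x hx =>
          hf.differentiableAt (isOpen_ball.mem_nhds (hsub (sphere_subset_closedBall hx)))
  calc ENNReal.ofReal (oscOn f (ball z r)) * ENNReal.ofReal (s - r)
      = ∫⁻ _ in Ioo r s, ENNReal.ofReal (oscOn f (ball z r)) := by
        rw [setLIntegral_const, Real.volume_Ioo]
    _ ≤ ∫⁻ ρ in Ioo r s, ∫⁻ θ in Ioo (-π) π,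
          ENNReal.ofReal ρ * ‖fderiv ℝ f (polarPoint z ρ θ)‖ₑ :=
        setLIntegral_mono' measurableSet_Ioo hcircle
    _ ≤ ∫⁻ ρ in Ioo 0 s, ∫⁻ θ in Ioo (-π) π,
          ENNReal.ofReal ρ * ‖fderiv ℝ f (polarPoint z ρ θ)‖ₑ :=
        lintegral_mono_set (Ioo_subset_Ioo_left hr)
    _ = ∫⁻ x in ball z s, ‖fderiv ℝ f x‖ₑ :=
        (lintegral_ball_eq_lintegral_polarPoint z s (measurable_fderiv ℝ f).enorm).symm

lemma oscOn_ball_mul_le_integral {f : ℝ² → ℝ} {z : ℝ²} {r s : ℝ} (hr : 0 ≤ r) (hrs : r ≤ s)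
    (hf : DifferentiableOn ℝ f (ball z s))
    (hosc : ∀ ρ ∈ Ioo r s, oscOn f (closedBall z ρ) ≤ oscOn f (sphere z ρ))
    (hint : IntegrableOn (fun x => ‖fderiv ℝ f x‖) (ball z s)) :
    oscOn f (ball z r) * (s - r) ≤ ∫ x in ball z s, ‖fderiv ℝ f x‖ := by
  have hint' : IntegrableOn (fderiv ℝ f) (ball z s) :=
    (integrable_norm_iff (measurable_fderiv ℝ f).aestronglyMeasurable).1 hint
  rw [← ENNReal.ofReal_le_ofReal_iff (integral_nonneg fun _ => norm_nonneg _),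
    ENNReal.ofReal_mul' (sub_nonneg.2 hrs), ofReal_integral_norm_eq_lintegral_enorm hint']
  exact ofReal_oscOn_ball_mul_le hr hf hosc

section Average

variable {α : Type*} [MeasurableSpace α] {μ : Measure α} {t : Set α} {g : α → ℝ}

lemma integrableOn_of_integrableOn_sq (ht : μ t ≠ ∞) (hg : AEStronglyMeasurable g (μ.restrict t))
    (hg2 : IntegrableOn (fun x => g x ^ 2) t μ) : IntegrableOn g t μ :=
  have : IsFiniteMeasure (μ.restrict t) := isFiniteMeasure_restrict.2 ht
  ((memLp_two_iff_integrable_sq hg).2 hg2).integrable one_le_two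

lemma setIntegral_le_measureReal_mul_sqrt_setAverage_sq (h0 : μ t ≠ 0) (ht : μ t ≠ ∞)
    (hg : AEStronglyMeasurable g (μ.restrict t)) (hg2 : IntegrableOn (fun x => g x ^ 2) t μ) :
    ∫ x in t, g x ∂μ ≤ μ.real t * √(⨍ x in t, g x ^ 2 ∂μ) := by
  have hjensen : (⨍ x in t, g x ∂μ) ^ 2 ≤ ⨍ x in t, g x ^ 2 ∂μ :=
    even_two.convexOn_pow.map_set_average_le (continuous_pow 2).continuousOn isClosed_univ h0 ht
      (.of_forall fun _ => mem_univ _) (integrableOn_of_integrableOn_sq ht hg hg2) hg2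
  rw [← measure_smul_setAverage g ht, smul_eq_mul]
  exact mul_le_mul_of_nonneg_left ((le_abs_self _).trans (Real.abs_le_sqrt hjensen))
    measureReal_nonneg

end Average

theorem statement19 :
    ∃ C : ℝ, 0 < C ∧
      ∀ (z : EuclideanSpace ℝ (Fin 2)) (R r : ℝ) (f : EuclideanSpace ℝ (Fin 2) → ℝ),
        0 < r → 2 * r ≤ R →
        ContinuousOn f (Metric.closedBall z R) →
        (∀ ρ : ℝ, 0 < ρ → ρ ≤ R →
          oscOn f (Metric.closedBall z ρ) = oscOn f (Metric.sphere z ρ)) →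
        DifferentiableOn ℝ f (Metric.ball z (2 * r)) →
        IntegrableOn (fun x => ‖fderiv ℝ f x‖ ^ 2) (Metric.ball z (2 * r)) →
        (oscOn f (Metric.ball z r) ≤ (1 / r) * ∫ x in Metric.ball z (2 * r), ‖fderiv ℝ f x‖) ∧
        oscOn f (Metric.ball z r) / r
          ≤ C * Real.sqrt (⨍ x in Metric.ball z (2 * r), ‖fderiv ℝ f x‖ ^ 2) := by
  refine ⟨4 * π, by positivity, fun z R r f hr hR _ hosc hdiff hint => ?_⟩
  have hmeas : AEStronglyMeasurable (fun x => ‖fderiv ℝ f x‖) (volume.restrict (ball z (2 * r))) :=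
    (measurable_fderiv ℝ f).norm.aestronglyMeasurable
  have hvol : volume.real (ball z (2 * r)) = 4 * π * r ^ 2 := by
    rw [measureReal_def, EuclideanSpace.volume_ball_fin_two, ENNReal.toReal_mul,
      ENNReal.toReal_pow, ENNReal.toReal_ofReal (by positivity),
      ENNReal.toReal_ofReal Real.pi_pos.le]
    ring
  have hkey : oscOn f (ball z r) * r ≤ ∫ x in ball z (2 * r), ‖fderiv ℝ f x‖ := by
    have := oscOn_ball_mul_le_integral hr.le (by linarith) hdiff
      (fun ρ hρ => (hosc ρ (hr.trans hρ.1) (by linarith [hρ.2])).le)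
      (integrableOn_of_integrableOn_sq measure_ball_lt_top.ne hmeas hint)
    rwa [show 2 * r - r = r by ring] at this
  have hCS := setIntegral_le_measureReal_mul_sqrt_setAverage_sq
    (measure_ball_pos volume z (by positivity)).ne' measure_ball_lt_top.ne hmeas hint
  constructor
  · rw [one_div_mul_eq_div, le_div_iff₀ hr]
    exact hkey
  · rw [div_le_iff₀ hr]
    refine le_of_mul_le_mul_right ?_ hr
    calc oscOn f (ball z r) * r ≤ ∫ x in ball z (2 * r), ‖fderiv ℝ f x‖ := hkey
      _ ≤ 4 * π * r ^ 2 * √(⨍ x in ball z (2 * r), ‖fderiv ℝ f x‖ ^ 2) := hvol ▸ hCS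
      _ = 4 * π * √(⨍ x in ball z (2 * r), ‖fderiv ℝ f x‖ ^ 2) * r * r := by ring
end
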